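/- Under the separable least-squares model assumptions with A(x) of full column rank for every x ∈ Ω and σ̃ := min_{x∈Ω} σ_min(A(x)) > 0, let L_vp(x) = ½‖(I − A(x)A(x)⁺)z‖² be the variable-projection objective. Suppose B ⊆ Ω is a convex set containing x* on which L_vp is α_vp-strongly convex for some α_vp > 0, and suppose x̂ ∈ B is a critical point of L_vp (∇L_vp(x̂) = 0). Set G = ‖∇L_vp(x*)‖ and ŷ(x) = A(x)⁺z. Then the lifted estimate θ̂_vp = (x̂, ŷ(x̂)) satisfies ρ(θ̂_vp, θ*) ≤ (σ₂‖y*‖ + σ₁)·(G/α_vp) + (σ₁/σ̃)·‖w‖ + (σ₁²/σ̃)·(G/α_vp)·‖y*‖. -/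

import Mathlib

/-!
Strong convexity of `L_vp` on the segment `[x*, x̂] ⊆ B` gives
`α_vp ‖x̂ - x*‖² ≤ ⟨∇L_vp(x̂) - ∇L_vp(x*), x̂ - x*⟩ = -⟨∇L_vp(x*), x̂ - x*⟩ ≤ G ‖x̂ - x*‖`,
so `‖x̂ - x*‖ ≤ G / α_vp`. As `A(x̂)⁺` is a left inverse of `A(x̂)`,
`ŷ(x̂) - y* = A(x̂)⁺ ((A(x*) - A(x̂)) y* + w)`; with `‖A(x̂)⁺‖ ≤ 1 / σ̃` and `A` being
`σ₁`-Lipschitz on `Ω`, the amplitude error is at most `(σ₁ ‖x̂ - x*‖ ‖y*‖ + ‖w‖) / σ̃`.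
-/

noncomputable section

abbrev EucSp (n : ℕ) : Type := EuclideanSpace ℝ (Fin n)

/-- The Moore–Penrose pseudo-inverse `A(x)⁺ = (A(x)ᵀA(x))⁻¹A(x)ᵀ` of a full-column-rank
dictionary. -/
def pinv {p d N : ℕ} (A : EucSp p → (EucSp d →L[ℝ] EucSp N)) (x : EucSp p) :
    EucSp N →L[ℝ] EucSp d :=
  (ContinuousLinearMap.adjoint (A x) ∘L A x).inverse ∘L ContinuousLinearMap.adjoint (A x)

/-- The variable-projection objective `L_vp(x) = ½‖(I − A(x)A(x)⁺)z‖²`. -/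
def lossVP {p d N : ℕ} (A : EucSp p → (EucSp d →L[ℝ] EucSp N)) (z : EucSp N)
    (x : EucSp p) : ℝ :=
  (1 / 2) * ‖z - A x (pinv A x z)‖ ^ 2

open ContinuousLinearMap
open scoped RealInnerProductSpace

section LeastSquares

variable {E F : Type*} [NormedAddCommGroup E] [InnerProductSpace ℝ E] [CompleteSpace E]
  [NormedAddCommGroup F] [InnerProductSpace ℝ F] [CompleteSpace F]
  {T : E →L[ℝ] F} {σ : ℝ}

def leastSquaresInv (T : E →L[ℝ] F) : F →L[ℝ] E :=
  (adjoint T ∘L T).inverse ∘L adjoint T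

theorem inner_adjoint_comp_self_apply (T : E →L[ℝ] F) (u v : E) :
    ⟪(adjoint T ∘L T) u, v⟫ = ⟪T u, T v⟫ :=
  adjoint_inner_left T v (T u)

/-- By Lax–Milgram, since `⟪T†T u, u⟫ = ‖T u‖² ≥ σ² ‖u‖²` makes `T†T` coercive. -/
theorem isInvertible_adjoint_comp_self (hσ : 0 < σ) (hT : ∀ v, σ * ‖v‖ ≤ ‖T v‖) :
    (adjoint T ∘L T).IsInvertible := by
  set B : E →L[ℝ] E →L[ℝ] ℝ := innerSL ℝ ∘L (adjoint T ∘L T)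
  have hB : IsCoercive B := by
    refine ⟨σ ^ 2, by positivity, fun u => ?_⟩
    calc σ ^ 2 * ‖u‖ * ‖u‖ = (σ * ‖u‖) ^ 2 := by ring
      _ ≤ ‖T u‖ ^ 2 := pow_le_pow_left₀ (by positivity) (hT u) 2
      _ = B u u := by
        rw [← real_inner_self_eq_norm_sq, ← inner_adjoint_comp_self_apply]; rfl
  refine ⟨hB.continuousLinearEquivOfBilin, ?_⟩
  ext1 v
  exact (hB.unique_continuousLinearEquivOfBilin fun w => rfl).symm

theorem leastSquaresInv_apply_self (hσ : 0 < σ) (hT : ∀ v, σ * ‖v‖ ≤ ‖T v‖) (v : E) :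
    leastSquaresInv T (T v) = v :=
  (isInvertible_adjoint_comp_self hσ hT).inverse_apply_self v

theorem mul_norm_leastSquaresInv_apply_le (hσ : 0 < σ) (hT : ∀ v, σ * ‖v‖ ≤ ‖T v‖) (z : F) :
    σ * ‖leastSquaresInv T z‖ ≤ ‖z‖ := by
  set u := leastSquaresInv T z
  have hu : (adjoint T ∘L T) u = adjoint T z :=
    (isInvertible_adjoint_comp_self hσ hT).self_apply_inverse _
  have hTu : ‖T u‖ ^ 2 ≤ ‖z‖ * ‖T u‖ := by
    rw [← real_inner_self_eq_norm_sq, ← inner_adjoint_comp_self_apply, hu,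
      adjoint_inner_left]
    exact real_inner_le_norm z (T u)
  refine (hT u).trans ?_
  nlinarith [norm_nonneg (T u), norm_nonneg z]

theorem mul_norm_leastSquaresInv_perturbation_le (hσ : 0 < σ) (hT : ∀ v, σ * ‖v‖ ≤ ‖T v‖)
    (S : E →L[ℝ] F) (y : E) (w : F) :
    σ * ‖leastSquaresInv T (S y + w) - y‖ ≤ ‖S - T‖ * ‖y‖ + ‖w‖ := by
  have h : leastSquaresInv T (S y + w) - y = leastSquaresInv T ((S - T) y + w) := by
    rw [sub_apply, sub_add_eq_add_sub, map_sub, leastSquaresInv_apply_self hσ hT]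
  rw [h]
  calc _ ≤ ‖(S - T) y + w‖ := mul_norm_leastSquaresInv_apply_le hσ hT _
    _ ≤ ‖S - T‖ * ‖y‖ + ‖w‖ := (norm_add_le _ _).trans (by gcongr; exact le_opNorm _ _)

end LeastSquares

theorem pinv_eq_leastSquaresInv {p d N : ℕ} (A : EucSp p → (EucSp d →L[ℝ] EucSp N))
    (x : EucSp p) : pinv A x = leastSquaresInv (A x) :=
  rfl

section StrongConvexity

variable {E : Type*} [NormedAddCommGroup E] [NormedSpace ℝ E] {f : E → ℝ} {s : Set E} {α : ℝ}

theorem Convex.mul_norm_sub_sq_le_fderiv_sub_apply (hs : Convex ℝ s) (hα : 0 < α)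
    (hf : ∀ x ∈ s, ∀ u, α * ‖u‖ ^ 2 ≤ fderiv ℝ (fderiv ℝ f) x u u)
    {x y : E} (hx : x ∈ s) (hy : y ∈ s) :
    α * ‖y - x‖ ^ 2 ≤ (fderiv ℝ f y - fderiv ℝ f x) (y - x) := by
  set u := y - x
  rcases eq_or_ne u 0 with hu | hu
  · simp [hu]
  -- a junk value `fderiv ℝ (fderiv ℝ f) z = 0` would contradict the hypothesis at `z`
  have hdiff : ∀ z ∈ s, DifferentiableAt ℝ (fderiv ℝ f) z := fun z hz => by
    by_contra h
    have := hf z hz u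
    rw [fderiv_zero_of_not_differentiableAt h, zero_apply, zero_apply] at this
    have : 0 < α * ‖u‖ ^ 2 := by positivity
    linarith
  set γ : ℝ → E := fun t => x + t • u
  have hγ : ∀ t ∈ Set.Icc (0 : ℝ) 1, γ t ∈ s := fun t ht => hs.add_smul_sub_mem hx hy ht
  set g : ℝ → ℝ := fun t => fderiv ℝ f (γ t) u
  have hg : ∀ t ∈ Set.Icc (0 : ℝ) 1, HasDerivAt g (fderiv ℝ (fderiv ℝ f) (γ t) u u) t := by
    intro t ht
    have hγ' : HasDerivAt γ u t := by
      simpa [γ] using ((hasDerivAt_id t).smul_const u).const_add x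
    simpa using ((hdiff _ (hγ t ht)).hasFDerivAt.comp_hasDerivAt t hγ').clm_apply
      (hasDerivAt_const t u)
  obtain ⟨c, hc, hgc⟩ := exists_hasDerivAt_eq_slope g _ one_pos
    (fun t ht => (hg t ht).continuousAt.continuousWithinAt)
    (fun t ht => hg t (Set.Ioo_subset_Icc_self ht))
  calc α * ‖u‖ ^ 2 ≤ fderiv ℝ (fderiv ℝ f) (γ c) u u :=
        hf _ (hγ c (Set.Ioo_subset_Icc_self hc)) u
    _ = g 1 - g 0 := by rw [hgc]; ring
    _ = _ := by simp [g, γ, u]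

theorem Convex.mul_norm_sub_le_norm_fderiv_of_fderiv_eq_zero (hs : Convex ℝ s) (hα : 0 < α)
    (hf : ∀ x ∈ s, ∀ u, α * ‖u‖ ^ 2 ≤ fderiv ℝ (fderiv ℝ f) x u u)
    {x y : E} (hx : x ∈ s) (hy : y ∈ s) (hy₀ : fderiv ℝ f y = 0) :
    α * ‖y - x‖ ≤ ‖fderiv ℝ f x‖ := by
  rcases (norm_nonneg (y - x)).eq_or_lt with h | h
  · rw [← h, mul_zero]
    exact norm_nonneg _
  refine le_of_mul_le_mul_right ?_ h
  calc α * ‖y - x‖ * ‖y - x‖ = α * ‖y - x‖ ^ 2 := by ring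
    _ ≤ (fderiv ℝ f y - fderiv ℝ f x) (y - x) :=
        hs.mul_norm_sub_sq_le_fderiv_sub_apply hα hf hx hy
    _ = -fderiv ℝ f x (y - x) := by simp [hy₀]
    _ ≤ ‖fderiv ℝ f x (y - x)‖ := neg_le_abs _
    _ ≤ ‖fderiv ℝ f x‖ * ‖y - x‖ := le_opNorm _ _

end StrongConvexity

theorem stability_of_variable_projection_general
    {p d N : ℕ}
    (Ω : Set (EucSp p)) (hΩconv : Convex ℝ Ω)
    (A : EucSp p → (EucSp d →L[ℝ] EucSp N)) (hA : ContDiff ℝ 3 A)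
    (σ1 σ2 : ℝ)
    (hσ1 : ∀ x ∈ Ω, ‖iteratedFDeriv ℝ 1 A x‖ ≤ σ1)
    (hσ2 : ∀ x ∈ Ω, ‖iteratedFDeriv ℝ 2 A x‖ ≤ σ2)
    -- full column rank and uniform lower singular-value bound σ̃ > 0
    (σmin : ℝ) (hσmin : 0 < σmin)
    (hσminA : ∀ x ∈ Ω, ∀ v : EucSp d, σmin * ‖v‖ ≤ ‖A x v‖)
    (xs : EucSp p) (hxs : xs ∈ Ω) (ys : EucSp d) (w : EucSp N)
    -- the convex set B ⊆ Ω containing x*, on which L_vp is α_vp-strongly convex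
    (B : Set (EucSp p)) (hBconv : Convex ℝ B) (hBΩ : B ⊆ Ω) (hxsB : xs ∈ B)
    (αvp : ℝ) (hαvp : 0 < αvp)
    (hsc : ∀ x ∈ B, ∀ u : EucSp p,
      αvp * ‖u‖ ^ 2 ≤ fderiv ℝ (fderiv ℝ (lossVP A (A xs ys + w))) x u u)
    -- the critical point x̂ ∈ B and the gradient norm G at x*
    (xhat : EucSp p) (hxhatB : xhat ∈ B)
    (hcrit : fderiv ℝ (lossVP A (A xs ys + w)) xhat = 0)
    (G : ℝ) (hG : G = ‖fderiv ℝ (lossVP A (A xs ys + w)) xs‖) :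
    (σ2 * ‖ys‖ + σ1) * ‖xhat - xs‖ + σ1 * ‖pinv A xhat (A xs ys + w) - ys‖
      ≤ (σ2 * ‖ys‖ + σ1) * (G / αvp) + (σ1 / σmin) * ‖w‖
        + (σ1 ^ 2 / σmin) * (G / αvp) * ‖ys‖ := by
  have hσ1₀ : 0 ≤ σ1 := (norm_nonneg _).trans (hσ1 xs hxs)
  have hσ2₀ : 0 ≤ σ2 := (norm_nonneg _).trans (hσ2 xs hxs)
  have hx : ‖xhat - xs‖ ≤ G / αvp := by
    rw [le_div_iff₀ hαvp, mul_comm, hG]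
    exact hBconv.mul_norm_sub_le_norm_fderiv_of_fderiv_eq_zero hαvp hsc hxsB hxhatB hcrit
  have hA_lip : ‖A xs - A xhat‖ ≤ σ1 * ‖xhat - xs‖ := by
    rw [norm_sub_rev xhat]
    refine hΩconv.norm_image_sub_le_of_norm_fderiv_le
      (fun x _ => (hA.differentiable (by norm_num)).differentiableAt) (fun x hx => ?_)
      (hBΩ hxhatB) hxs
    simpa only [norm_iteratedFDeriv_one] using hσ1 x hx
  have hy : ‖pinv A xhat (A xs ys + w) - ys‖ ≤ (σ1 * (G / αvp) * ‖ys‖ + ‖w‖) / σmin := by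
    rw [le_div_iff₀' hσmin, pinv_eq_leastSquaresInv]
    calc σmin * ‖leastSquaresInv (A xhat) (A xs ys + w) - ys‖
          ≤ ‖A xs - A xhat‖ * ‖ys‖ + ‖w‖ :=
          mul_norm_leastSquaresInv_perturbation_le hσmin (hσminA xhat (hBΩ hxhatB)) _ _ _
      _ ≤ σ1 * (G / αvp) * ‖ys‖ + ‖w‖ := by gcongr; exact hA_lip.trans (by gcongr)
  calc _ ≤ (σ2 * ‖ys‖ + σ1) * (G / αvp) + σ1 * ((σ1 * (G / αvp) * ‖ys‖ + ‖w‖) / σmin) := by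
        gcongr
    _ = _ := by ring

/-- **Stability of variable-projection recovery.** -/
theorem stability_of_variable_projection
    {p d N : ℕ}
    (Ω : Set (EucSp p)) (hΩconv : Convex ℝ Ω) (hΩcomp : IsCompact Ω)
    (A : EucSp p → (EucSp d →L[ℝ] EucSp N)) (hA : ContDiff ℝ 3 A)
    (σ1 σ2 : ℝ)
    (hσ1 : ∀ x ∈ Ω, ‖iteratedFDeriv ℝ 1 A x‖ ≤ σ1)
    (hσ2 : ∀ x ∈ Ω, ‖iteratedFDeriv ℝ 2 A x‖ ≤ σ2)
    -- full column rank and uniform lower singular-value bound σ̃ > 0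
    (hrank : ∀ x ∈ Ω, Function.Injective (A x))
    (σmin : ℝ) (hσmin : 0 < σmin)
    (hσminA : ∀ x ∈ Ω, ∀ v : EucSp d, σmin * ‖v‖ ≤ ‖A x v‖)
    (xs : EucSp p) (hxs : xs ∈ Ω) (ys : EucSp d) (w : EucSp N)
    -- the convex set B ⊆ Ω containing x*, on which L_vp is α_vp-strongly convex
    (B : Set (EucSp p)) (hBconv : Convex ℝ B) (hBΩ : B ⊆ Ω) (hxsB : xs ∈ B)
    (αvp : ℝ) (hαvp : 0 < αvp)
    (hsc : ∀ x ∈ B, ∀ u : EucSp p,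
      αvp * ‖u‖ ^ 2 ≤ fderiv ℝ (fderiv ℝ (lossVP A (A xs ys + w))) x u u)
    -- the critical point x̂ ∈ B and the gradient norm G at x*
    (xhat : EucSp p) (hxhatB : xhat ∈ B)
    (hcrit : fderiv ℝ (lossVP A (A xs ys + w)) xhat = 0)
    (G : ℝ) (hG : G = ‖fderiv ℝ (lossVP A (A xs ys + w)) xs‖) :
    (σ2 * ‖ys‖ + σ1) * ‖xhat - xs‖ + σ1 * ‖pinv A xhat (A xs ys + w) - ys‖
      ≤ (σ2 * ‖ys‖ + σ1) * (G / αvp) + (σ1 / σmin) * ‖w‖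
        + (σ1 ^ 2 / σmin) * (G / αvp) * ‖ys‖ :=
  stability_of_variable_projection_general Ω hΩconv A hA σ1 σ2 hσ1 hσ2 σmin hσmin hσminA xs hxs ys w
    B hBconv hBΩ hxsB αvp hαvp hsc xhat hxhatB hcrit G hG
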